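/- Let p : E → B be a restriction semifunctor between restriction categories. The following are equivalent: (i) p is separated; (ii) every partial isomorphism in E is p-prone; (iii) every restriction idempotent in E is p-prone. -/
import Mathlib


open CategoryTheory

universe v₁ u₁ v₂ u₂ v₃ u₃

/-- A restriction category: a category equipped with a restriction combinator
satisfying the four restriction axioms [R.1]–[R.4]. -/
class RestrictionCategory (C : Type u₁) [Category.{v₁} C] where
  rest : ∀ {A B : C}, (A ⟶ B) → (A ⟶ A)
  rest_comp_self : ∀ {A B : C} (f : A ⟶ B), rest f ≫ f = f
  rest_comm : ∀ {A B C' : C} (f : A ⟶ B) (g : A ⟶ C'), rest f ≫ rest g = rest g ≫ rest f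
  rest_rest_comp : ∀ {A B C' : C} (f : A ⟶ B) (g : A ⟶ C'),
    rest (rest f ≫ g) = rest f ≫ rest g
  comp_rest : ∀ {A B C' : C} (f : A ⟶ B) (g : B ⟶ C'),
    f ≫ rest g = rest (f ≫ g) ≫ f

open RestrictionCategory

/-- A restriction semifunctor: preserves composition and restriction
(but not necessarily identities). -/
structure RestrictionSemifunctor (E : Type u₁) (B : Type u₂) [Category.{v₁} E]
    [Category.{v₂} B] [RestrictionCategory E] [RestrictionCategory B] where
  obj : E → B
  map : ∀ {X Y : E}, (X ⟶ Y) → (obj X ⟶ obj Y)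
  map_comp : ∀ {X Y Z : E} (f : X ⟶ Y) (g : Y ⟶ Z), map (f ≫ g) = map f ≫ map g
  map_rest : ∀ {X Y : E} (f : X ⟶ Y), map (rest f) = rest (map f)

variable {E : Type u₁} {B : Type u₂} [Category.{v₁} E] [Category.{v₂} B]
  [RestrictionCategory E] [RestrictionCategory B]

/-- A morphism `f' : X' ⟶ X` is `p`-prone if every precise triangle
`h ≫ p(f') = p(g)` in the base has a unique precise lifting. -/
def RestrictionSemifunctor.IsProne (p : RestrictionSemifunctor E B) {X' X : E}
    (f' : X' ⟶ X) : Prop :=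
  ∀ (Y : E) (g : Y ⟶ X) (h : p.obj Y ⟶ p.obj X'),
    h ≫ p.map f' = p.map g → rest h = rest (p.map g) →
    ∃! ht : Y ⟶ X', p.map ht = h ∧ ht ≫ f' = g ∧ rest ht = rest g

/-- A partial isomorphism: `f` with a partial inverse `g` satisfying
`f ≫ g = f̄` and `g ≫ f = ḡ`. -/
def IsPartialIso {C : Type u₃} [Category.{v₃} C] [RestrictionCategory C]
    {A B : C} (f : A ⟶ B) : Prop :=
  ∃ g : B ⟶ A, f ≫ g = rest f ∧ g ≫ f = rest g

/-- A restriction semifunctor is separated if it is injective on restriction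
idempotents on each object. -/
def RestrictionSemifunctor.IsSeparated (p : RestrictionSemifunctor E B) : Prop :=
  ∀ (X : E) (e e' : X ⟶ X), rest e = e → rest e' = e' → p.map e = p.map e' → e = e'

section Aux

variable {C : Type u₃} [Category.{v₃} C] [RestrictionCategory C]

lemma rest_idem {A B' : C} (f : A ⟶ B') : rest f ≫ rest f = rest f := by
  have h := rest_rest_comp f f
  rw [rest_comp_self] at h
  exact h.symm

lemma rest_rest {A B' : C} (f : A ⟶ B') : rest (rest f) = rest f := by
  have h1 := rest_rest_comp f (rest f)
  rw [rest_idem] at h1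
  have h2 := rest_comm f (rest f)
  have h3 := rest_comp_self (rest f)
  -- h1 : rest (rest f) = rest f ≫ rest (rest f)
  -- h2 : rest f ≫ rest (rest f) = rest (rest f) ≫ rest f
  rw [h1, h2, h3]

end Aux

lemma sep_imp_partialIso_prone (p : RestrictionSemifunctor E B)
    (sep : p.IsSeparated) {X Y : E} (f : X ⟶ Y) (hf : IsPartialIso f) :
    p.IsProne f := by
  obtain ⟨g, hfg, hgf⟩ := hf
  intro Z k h hcomm hrest
  have himg : p.map (k ≫ g) = h := by
    calc p.map (k ≫ g) = p.map k ≫ p.map g := p.map_comp k g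
    _ = (h ≫ p.map f) ≫ p.map g := by rw [hcomm]
    _ = h ≫ p.map (f ≫ g) := by rw [Category.assoc, p.map_comp]
    _ = h ≫ rest (p.map f) := by rw [hfg, p.map_rest]
    _ = rest (h ≫ p.map f) ≫ h := comp_rest h (p.map f)
    _ = rest h ≫ h := by rw [hcomm, ← hrest]
    _ = h := rest_comp_self h
  have hsep : rest (k ≫ g) = rest k := by
    apply sep _ _ _ (rest_rest _) (rest_rest _)
    rw [p.map_rest, p.map_rest, himg, hrest]
  have hcompf : (k ≫ g) ≫ f = k := by
    calc (k ≫ g) ≫ f = k ≫ rest g := by rw [Category.assoc, hgf]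
    _ = rest (k ≫ g) ≫ k := comp_rest k g
    _ = rest k ≫ k := by rw [hsep]
    _ = k := rest_comp_self k
  refine ⟨k ≫ g, ⟨himg, hcompf, hsep⟩, ?_⟩
  rintro t ⟨himg', hcompf', hrest'⟩
  calc t = rest t ≫ t := (rest_comp_self t).symm
  _ = rest (t ≫ f) ≫ t := by rw [hrest', ← hcompf']
  _ = t ≫ rest f := (comp_rest t f).symm
  _ = t ≫ (f ≫ g) := by rw [hfg]
  _ = (t ≫ f) ≫ g := by rw [Category.assoc]
  _ = k ≫ g := by rw [hcompf']

lemma restIdem_prone_imp_sep (p : RestrictionSemifunctor E B)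
    (hp : ∀ {X : E} (e : X ⟶ X), rest e = e → p.IsProne e) :
    p.IsSeparated := by
  have key : ∀ (X : E) (e e' : X ⟶ X), rest e = e → rest e' = e' →
      p.map e = p.map e' → e ≫ e' = e := by
    intro X e e' he he' hpe
    have hee : e ≫ e = e := by
      nth_rewrite 1 [← he]
      exact rest_comp_self e
    obtain ⟨t, ⟨_, ht2, _⟩, _⟩ := hp e' he' X e (p.map e)
      (by rw [← hpe, ← p.map_comp, hee]) rfl
    calc e ≫ e' = (t ≫ e') ≫ e' := by rw [ht2]
    _ = t ≫ (e' ≫ e') := by rw [Category.assoc]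
    _ = t ≫ e' := by
        congr 1
        nth_rewrite 1 [← he']
        exact rest_comp_self e'
    _ = e := ht2
  intro X e e' he he' hpe
  calc e = e ≫ e' := (key X e e' he he' hpe).symm
  _ = rest e ≫ rest e' := by rw [he, he']
  _ = rest e' ≫ rest e := rest_comm e' e ▸ (rest_comm e e')
  _ = e' ≫ e := by rw [he, he']
  _ = e' := key X e' e he' he hpe.symm

/-- The following are equivalent: (i) `p` is separated; (ii) all partial
isomorphisms of `E` are p-prone; (iii) all restriction idempotents of `E`
are p-prone. -/
theorem separated_iff_partialIso_prone_iff_restIdem_prone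
    (p : RestrictionSemifunctor E B) :
    (p.IsSeparated ↔ ∀ {X Y : E} (f : X ⟶ Y), IsPartialIso f → p.IsProne f) ∧
    (p.IsSeparated ↔ ∀ {X : E} (e : X ⟶ X), rest e = e → p.IsProne e) := by
  have idem_pIso : ∀ {X : E} (e : X ⟶ X), rest e = e → IsPartialIso e := by
    intro X e he
    refine ⟨e, ?_, ?_⟩ <;> rw [← he, rest_idem, rest_rest]
  constructor
  · constructor
    · intro sep X Y f hf
      exact sep_imp_partialIso_prone p sep f hf
    · intro hp
      exact restIdem_prone_imp_sep p (fun e he => hp e (idem_pIso e he))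
  · constructor
    · intro sep X e he
      exact sep_imp_partialIso_prone p sep e (idem_pIso e he)
    · intro hp
      exact restIdem_prone_imp_sep p hp
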